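/- arXiv:math/0606656 — 2 statements merged into one kernel-verified Lean document; each statement's English description precedes it below -/
import Mathlib

section
/- Fix a positive integer k and 0 ≤ i ≤ k. The number of admissible subsets of {1, ..., 2k} of cardinality i equals C(2k, i) − C(2k, i−1), where a subset I is admissible if |I ∩ {1,...,m}| ≤ m/2 for every m ∈ {1, ..., 2k}. -/
/-- Binomial coefficient with an integer lower index, zero when the index is negative. -/
def C (n : ℕ) (j : ℤ) : ℕ := if j < 0 then 0 else n.choose j.toNat

namespace Stmt8Aux

def P (n : ℕ) (I : Finset ℕ) : Prop :=
  ∀ m ∈ Finset.Icc 1 n, 2 * (I ∩ Finset.Icc 1 m).card ≤ m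

instance (n : ℕ) (I : Finset ℕ) : Decidable (P n I) := by
  unfold P; infer_instance

def S (n i : ℕ) : Finset (Finset ℕ) :=
  (Finset.Icc 1 n).powerset.filter (fun I => I.card = i ∧ P n I)

lemma mem_S {n i : ℕ} {I : Finset ℕ} :
    I ∈ S n i ↔ I ⊆ Finset.Icc 1 n ∧ I.card = i ∧ P n I := by
  simp [S, and_assoc]

lemma inter_erase {I : Finset ℕ} {a m : ℕ} (ham : a ∉ Finset.Icc 1 m) :
    I.erase a ∩ Finset.Icc 1 m = I ∩ Finset.Icc 1 m := by
  ext x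
  simp only [Finset.mem_inter, Finset.mem_erase]
  constructor
  · rintro ⟨⟨-, h1⟩, h2⟩; exact ⟨h1, h2⟩
  · rintro ⟨h1, h2⟩
    exact ⟨⟨fun h => ham (h ▸ h2), h1⟩, h2⟩

lemma inter_insert {I : Finset ℕ} {a m : ℕ} (ham : a ∉ Finset.Icc 1 m) :
    insert a I ∩ Finset.Icc 1 m = I ∩ Finset.Icc 1 m := by
  ext x
  simp only [Finset.mem_inter, Finset.mem_insert]
  constructor
  · rintro ⟨rfl | h1, h2⟩
    · exact absurd h2 ham
    · exact ⟨h1, h2⟩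
  · rintro ⟨h1, h2⟩
    exact ⟨Or.inr h1, h2⟩

lemma S_empty {n i : ℕ} (h : n < 2 * i) : S n i = ∅ := by
  ext I
  simp only [mem_S, Finset.notMem_empty, iff_false, not_and]
  rintro hsub hcard hP
  rcases Nat.eq_zero_or_pos n with rfl | hn
  · have : I = ∅ := Finset.subset_empty.mp (by simpa using hsub)
    subst this
    simp at hcard
    omega
  · have hm : n ∈ Finset.Icc 1 n := Finset.mem_Icc.mpr ⟨hn, le_rfl⟩
    have := hP n hm
    rw [Finset.inter_eq_left.mpr hsub, hcard] at this
    omega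

lemma S_zero (n : ℕ) : S n 0 = {∅} := by
  ext I
  simp only [mem_S, Finset.card_eq_zero, Finset.mem_singleton]
  constructor
  · rintro ⟨-, rfl, -⟩; rfl
  · rintro rfl
    refine ⟨Finset.empty_subset _, rfl, fun m hm => ?_⟩
    simp

lemma rec_card {n i : ℕ} (h : 2 * (i + 1) ≤ n + 1) :
    (S (n + 1) (i + 1)).card = (S n (i + 1)).card + (S n i).card := by
  have hsplit := Finset.card_filter_add_card_filter_not
    (s := S (n + 1) (i + 1)) (p := fun I => (n + 1) ∈ I)
  have hicc : Finset.Icc 1 n ⊆ Finset.Icc 1 (n + 1) := by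
    intro x hx; simp only [Finset.mem_Icc] at *; omega
  have hnot : (n + 1) ∉ Finset.Icc 1 n := by simp
  -- part without n+1
  have h1 : (S (n + 1) (i + 1)).filter (fun I => ¬ (n + 1) ∈ I) = S n (i + 1) := by
    ext I
    simp only [Finset.mem_filter, mem_S]
    constructor
    · rintro ⟨⟨hsub, hcard, hP⟩, hni⟩
      have hsub' : I ⊆ Finset.Icc 1 n := by
        intro x hx
        have := hsub hx
        simp only [Finset.mem_Icc] at this ⊢
        have : x ≠ n + 1 := fun hxn => hni (hxn ▸ hx)
        omega
      exact ⟨hsub', hcard, fun m hm => hP m (hicc hm)⟩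
    · rintro ⟨hsub, hcard, hP⟩
      refine ⟨⟨hsub.trans hicc, hcard, fun m hm => ?_⟩,
        fun hni => hnot (hsub hni)⟩
      simp only [Finset.mem_Icc] at hm
      rcases Nat.lt_or_ge m (n + 1) with hmn | hmn
      · exact hP m (by simp only [Finset.mem_Icc]; omega)
      · have hmeq : m = n + 1 := by omega
        subst hmeq
        rw [Finset.inter_eq_left.mpr (hsub.trans hicc), hcard]
        exact h
  -- part with n+1
  have h2 : ((S (n + 1) (i + 1)).filter (fun I => (n + 1) ∈ I)).card = (S n i).card := by
    refine Finset.card_bij' (fun I _ => I.erase (n + 1))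
      (fun J _ => insert (n + 1) J) ?_ ?_ ?_ ?_
    · rintro I hI
      rw [Finset.mem_filter, mem_S] at hI
      obtain ⟨⟨hsub, hcard, hP⟩, hmem⟩ := hI
      rw [mem_S]
      refine ⟨?_, ?_, ?_⟩
      · intro x hx
        rw [Finset.mem_erase] at hx
        have := hsub hx.2
        simp only [Finset.mem_Icc] at this ⊢
        omega
      · rw [Finset.card_erase_of_mem hmem, hcard]
        omega
      · intro m hm
        simp only [Finset.mem_Icc] at hm
        have hne : (n + 1) ∉ Finset.Icc 1 m := by
          simp only [Finset.mem_Icc]; omega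
        rw [inter_erase hne]
        exact hP m (by simp only [Finset.mem_Icc]; omega)
    · rintro J hJ
      rw [mem_S] at hJ
      obtain ⟨hsub, hcard, hP⟩ := hJ
      have hnJ : (n + 1) ∉ J := fun hmem => hnot (hsub hmem)
      rw [Finset.mem_filter, mem_S]
      refine ⟨⟨?_, ?_, ?_⟩, Finset.mem_insert_self _ _⟩
      · rw [Finset.insert_subset_iff]
        exact ⟨by simp, hsub.trans hicc⟩
      · rw [Finset.card_insert_of_notMem hnJ, hcard]
      · intro m hm
        simp only [Finset.mem_Icc] at hm
        rcases Nat.lt_or_ge m (n + 1) with hmn | hmn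
        · have hne : (n + 1) ∉ Finset.Icc 1 m := by
            simp only [Finset.mem_Icc]; omega
          rw [inter_insert hne]
          exact hP m (by simp only [Finset.mem_Icc]; omega)
        · have hmeq : m = n + 1 := by omega
          subst hmeq
          have : insert (n + 1) J ⊆ Finset.Icc 1 (n + 1) := by
            rw [Finset.insert_subset_iff]
            exact ⟨by simp, hsub.trans hicc⟩
          rw [Finset.inter_eq_left.mpr this,
            Finset.card_insert_of_notMem hnJ, hcard]
          exact h
    · rintro I hI
      rw [Finset.mem_filter] at hI
      exact Finset.insert_erase hI.2
    · rintro J hJ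
      rw [mem_S] at hJ
      exact Finset.erase_insert (fun hmem => hnot (hJ.1 hmem))
  rw [← hsplit, h2, h1, Nat.add_comm]

lemma C_coe (n j : ℕ) : C n (j : ℤ) = n.choose j := by
  simp [C]

lemma C_neg_one (n : ℕ) : C n (-1) = 0 := by
  simp [C]

lemma C_pred (n j : ℕ) : C n (((j + 1 : ℕ) : ℤ) - 1) = n.choose j := by
  rw [show (((j + 1 : ℕ) : ℤ) - 1) = ((j : ℕ) : ℤ) by push_cast; ring, C_coe]

lemma main (n : ℕ) : ∀ i, 2 * i ≤ n + 1 →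
    (S n i).card + C n ((i : ℤ) - 1) = n.choose i := by
  induction n with
  | zero =>
    rintro (_ | i) hi
    · simp [S_zero, C_neg_one]
    · omega
  | succ n ih =>
    rintro (_ | i) hi
    · simp [S_zero, C_neg_one]
    · have hC : C (n + 1) ((i + 1 : ℕ) : ℤ) - 1 = 0 ∨ True := Or.inr trivial
      have hCi : C (n + 1) (((i : ℕ) + 1 : ℤ) - 1) = (n + 1).choose i := by
        have : ((i : ℤ) + 1) - 1 = (i : ℤ) := by ring
        rw [show (((i : ℕ) + 1 : ℤ) - 1) = (i : ℤ) by push_cast; ring, C_coe]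
      rcases Nat.lt_or_ge (n + 1) (2 * (i + 1)) with hlt | hge
      · -- S is empty, and choose (n+1) (i+1) = choose (n+1) i since n+1 = 2i+1
        have hn : n + 1 = 2 * i + 1 := by omega
        rw [S_empty hlt]
        simp only [Finset.card_empty, Nat.zero_add]
        rw [C_pred, hn]
        rw [← Nat.choose_symm (by omega : i + 1 ≤ 2 * i + 1)]
        congr 1
        omega
      · rw [rec_card hge, C_pred]
        have h1 := ih (i + 1) (by omega)
        have h2 := ih i (by omega)
        rw [C_pred] at h1
        have hP : (n + 1).choose (i + 1) = n.choose i + n.choose (i + 1) :=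
          Nat.choose_succ_succ' n i
        have hCn : (n + 1).choose i = n.choose i + C n ((i : ℤ) - 1) := by
          cases i with
          | zero => simp [C_neg_one]
          | succ j =>
            rw [C_pred, Nat.choose_succ_succ' n j]
            omega
        omega

lemma cond_iff (c m : ℕ) : ((c : ℚ) ≤ (m : ℚ) / 2) ↔ 2 * c ≤ m := by
  rw [le_div_iff₀ (by norm_num : (0 : ℚ) < 2)]
  norm_cast
  omega

end Stmt8Aux

open Stmt8Aux in
theorem stmt_8 (k i : ℕ) (hk : 0 < k) (hi : i ≤ k) :
    Set.ncard {I : Finset ℕ | I ⊆ Finset.Icc 1 (2 * k) ∧ I.card = i ∧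
        ∀ m ∈ Finset.Icc 1 (2 * k), ((I ∩ Finset.Icc 1 m).card : ℚ) ≤ (m : ℚ) / 2} =
      Nat.choose (2 * k) i - C (2 * k) ((i : ℤ) - 1) := by
  have hset : {I : Finset ℕ | I ⊆ Finset.Icc 1 (2 * k) ∧ I.card = i ∧
      ∀ m ∈ Finset.Icc 1 (2 * k), ((I ∩ Finset.Icc 1 m).card : ℚ) ≤ (m : ℚ) / 2}
      = ↑(S (2 * k) i) := by
    ext I
    simp only [Set.mem_setOf_eq, Finset.mem_coe, mem_S, P, cond_iff]
  rw [hset, Set.ncard_coe_finset]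
  have := main (2 * k) i (by omega)
  omega
end

section
/- The total number of admissible subsets of {1, ..., 2k} equals C(2k, k), where a subset I is admissible if |I ∩ {1,...,m}| ≤ m/2 for every m ∈ {1, ..., 2k}. -/
/-!
Call `I ⊆ {1,…,n}` a ballot set if every initial segment `{1,…,m}` contains at most `m / 2`
elements of `I`. Splitting by whether `n + 1 ∈ I` gives Pascal's recursion for the number
`b(n, j)` of ballot sets of size `j`, except at the boundary `2j > n` where `b(n, j) = 0`; it
follows that `b(n, j) = C(n, j) - C(n, j - 1)` for `2j ≤ n + 1`. Summing over `j ≤ k`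
telescopes to `C(2k, k)`.
-/

open Finset

def IsBallotSet (n : ℕ) (I : Finset ℕ) : Prop :=
  I ⊆ Icc 1 n ∧ ∀ m ∈ Icc 1 n, 2 * #(I ∩ Icc 1 m) ≤ m

instance (n : ℕ) : DecidablePred (IsBallotSet n) := fun _ => by
  unfold IsBallotSet; infer_instance

noncomputable def ballotSets (n j : ℕ) : Finset (Finset ℕ) :=
  {I ∈ (Icc 1 n).powerset | IsBallotSet n I ∧ #I = j}

lemma mem_ballotSets {n j : ℕ} {I : Finset ℕ} :
    I ∈ ballotSets n j ↔ IsBallotSet n I ∧ #I = j := by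
  simp only [ballotSets, mem_filter, mem_powerset, and_iff_right_iff_imp]
  exact fun h => h.1.1

lemma IsBallotSet.two_mul_card_le {n : ℕ} {I : Finset ℕ} (h : IsBallotSet n I) :
    2 * #I ≤ n := by
  rcases Nat.eq_zero_or_pos n with rfl | hn
  · simp [subset_empty.mp h.1]
  · simpa [inter_eq_left.mpr h.1] using h.2 n (mem_Icc.mpr ⟨hn, le_rfl⟩)

lemma IsBallotSet.succ_notMem {n : ℕ} {I : Finset ℕ} (h : IsBallotSet n I) : n + 1 ∉ I :=
  fun hmem => by simpa using mem_Icc.mp (h.1 hmem)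

lemma isBallotSet_succ_iff {n : ℕ} {I : Finset ℕ} :
    IsBallotSet (n + 1) I ↔ IsBallotSet n (I.erase (n + 1)) ∧ 2 * #I ≤ n + 1 := by
  have hIcc : Icc 1 (n + 1) = insert (n + 1) (Icc 1 n) :=
    (insert_Icc_right_eq_Icc_add_one (by omega)).symm
  have hprefix : ∀ m ∈ Icc 1 n, I.erase (n + 1) ∩ Icc 1 m = I ∩ Icc 1 m := fun m hm => by
    rw [erase_inter, erase_eq_of_notMem]
    simp only [mem_inter, mem_Icc] at hm ⊢
    omega
  unfold IsBallotSet
  rw [hIcc, subset_insert_iff, forall_mem_insert]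
  constructor
  · rintro ⟨hsub, hlast, hcond⟩
    refine ⟨⟨hsub, fun m hm => ?_⟩, ?_⟩
    · rw [hprefix m hm]; exact hcond m hm
    · rwa [inter_eq_left.mpr (hIcc ▸ subset_insert_iff.mpr hsub)] at hlast
  · rintro ⟨⟨hsub, hcond⟩, hcard⟩
    refine ⟨hsub, ?_, fun m hm => hprefix m hm ▸ hcond m hm⟩
    rwa [inter_eq_left.mpr (hIcc ▸ subset_insert_iff.mpr hsub)]

lemma ballotSets_eq_empty {n j : ℕ} (h : n < 2 * j) : ballotSets n j = ∅ :=
  eq_empty_of_forall_notMem fun I hI => by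
    obtain ⟨hballot, rfl⟩ := mem_ballotSets.mp hI
    have := hballot.two_mul_card_le
    omega

lemma ballotSets_zero (n : ℕ) : ballotSets n 0 = {∅} := by
  ext I
  simp only [mem_ballotSets, mem_singleton, card_eq_zero, and_iff_right_iff_imp]
  rintro rfl
  exact ⟨empty_subset _, fun m _ => by simp⟩

lemma ballotSets_succ_succ {n j : ℕ} (h : 2 * (j + 1) ≤ n + 1) :
    ballotSets (n + 1) (j + 1) =
      ballotSets n (j + 1) ∪ (ballotSets n j).image (insert (n + 1)) := by
  ext I
  simp only [mem_union, mem_image, mem_ballotSets, isBallotSet_succ_iff]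
  constructor
  · rintro ⟨⟨hI, -⟩, hcard⟩
    by_cases hmem : n + 1 ∈ I
    · refine Or.inr ⟨I.erase (n + 1), ⟨hI, ?_⟩, insert_erase hmem⟩
      rw [card_erase_of_mem hmem, hcard, Nat.add_sub_cancel]
    · rw [erase_eq_of_notMem hmem] at hI
      exact Or.inl ⟨hI, hcard⟩
  · rintro (⟨hI, hcard⟩ | ⟨J, ⟨hJ, hcard⟩, rfl⟩)
    · rw [erase_eq_of_notMem hI.succ_notMem]
      exact ⟨⟨hI, hcard ▸ h⟩, hcard⟩
    · rw [erase_insert hJ.succ_notMem, card_insert_of_notMem hJ.succ_notMem, hcard]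
      exact ⟨⟨hJ, h⟩, rfl⟩

lemma card_ballotSets_succ_succ {n j : ℕ} (h : 2 * (j + 1) ≤ n + 1) :
    #(ballotSets (n + 1) (j + 1)) = #(ballotSets n (j + 1)) + #(ballotSets n j) := by
  have notMem : ∀ J ∈ ballotSets n j, n + 1 ∉ J := fun J hJ =>
    (mem_ballotSets.mp hJ).1.succ_notMem
  rw [ballotSets_succ_succ h, card_union_of_disjoint, card_image_of_injOn]
  · intro J hJ J' hJ' hJJ'
    simpa [erase_insert (notMem J hJ), erase_insert (notMem J' hJ')] using
      congrArg (erase · (n + 1)) hJJ'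
  · refine disjoint_left.mpr fun I hI hI' => ?_
    obtain ⟨J, -, rfl⟩ := mem_image.mp hI'
    exact (mem_ballotSets.mp hI).1.succ_notMem (mem_insert_self _ _)

theorem card_ballotSets_add_choose {n j : ℕ} (h : 2 * (j + 1) ≤ n + 1) :
    #(ballotSets n (j + 1)) + n.choose j = n.choose (j + 1) := by
  induction n generalizing j with
  | zero => omega
  | succ n ih =>
    rcases h.lt_or_eq with h | h
    · have hnext := ih (j := j) (by omega)
      rw [card_ballotSets_succ_succ (by omega), Nat.choose_succ_succ' n j]
      rcases j with _ | j
      · simp only [ballotSets_zero, card_singleton, Nat.choose_zero_right] at hnext ⊢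
        omega
      · have hprev := ih (j := j) (by omega)
        rw [Nat.choose_succ_succ' n j]
        omega
    · obtain rfl : n = 2 * j := by omega
      rw [ballotSets_eq_empty (by omega), card_empty, zero_add, Nat.choose_symm_half]

theorem sum_card_ballotSets {n k : ℕ} (h : 2 * k ≤ n + 1) :
    ∑ j ∈ range (k + 1), #(ballotSets n j) = n.choose k := by
  induction k with
  | zero => simp [ballotSets_zero]
  | succ k ih =>
    rw [sum_range_succ, ih (by omega), add_comm, card_ballotSets_add_choose h]

theorem stmt_10_general (k : ℕ) :
    Set.ncard {I : Finset ℕ | I ⊆ Finset.Icc 1 (2 * k) ∧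
        ∀ m ∈ Finset.Icc 1 (2 * k), ((I ∩ Finset.Icc 1 m).card : ℚ) ≤ (m : ℚ) / 2} =
      Nat.choose (2 * k) k := by
  have hset : {I : Finset ℕ | I ⊆ Icc 1 (2 * k) ∧
      ∀ m ∈ Icc 1 (2 * k), ((I ∩ Icc 1 m).card : ℚ) ≤ (m : ℚ) / 2} =
      ↑((range (k + 1)).biUnion (ballotSets (2 * k))) := by
    ext I
    have hrat : ∀ c m : ℕ, (c : ℚ) ≤ (m : ℚ) / 2 ↔ 2 * c ≤ m := fun c m => by
      rw [le_div_iff₀ two_pos, mul_comm]; exact_mod_cast Iff.rfl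
    simp only [Set.mem_ofPred_eq, coe_biUnion, coe_range, Set.mem_iUnion, mem_coe,
      mem_ballotSets, Set.mem_Iio, hrat, exists_prop]
    refine ⟨fun hI => ⟨#I, ?_, hI, rfl⟩, fun ⟨_, _, hI, _⟩ => hI⟩
    have := IsBallotSet.two_mul_card_le hI
    omega
  rw [hset, Set.ncard_coe_finset, card_biUnion, sum_card_ballotSets (by omega)]
  exact fun i _ j _ hij => disjoint_left.mpr fun I hi hj =>
    hij ((mem_ballotSets.mp hi).2.symm.trans (mem_ballotSets.mp hj).2)

theorem stmt_10 (k : ℕ) (hk : 0 < k) :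
    Set.ncard {I : Finset ℕ | I ⊆ Finset.Icc 1 (2 * k) ∧
        ∀ m ∈ Finset.Icc 1 (2 * k), ((I ∩ Finset.Icc 1 m).card : ℚ) ≤ (m : ℚ) / 2} =
      Nat.choose (2 * k) k :=
  stmt_10_general k
end
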